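/- For real x and y with y > 0, x R_C(y², y² + x²) = arctan(x/y). -/

import Mathlib

open MeasureTheory Real

noncomputable def RC (x y : ℝ) : ℝ :=
  (1/2) * ∫ t in Set.Ioi (0:ℝ), (Real.sqrt (t + x))⁻¹ * (t + y)⁻¹

noncomputable def RF (x y z : ℝ) : ℝ :=
  (1/2) * ∫ t in Set.Ioi (0:ℝ), (Real.sqrt ((t + x) * (t + y) * (t + z)))⁻¹

noncomputable def RD (x y z : ℝ) : ℝ :=
  (3/2) * ∫ t in Set.Ioi (0:ℝ),
    (Real.sqrt ((t + x) * (t + y)))⁻¹ * ((t + z) * Real.sqrt (t + z))⁻¹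

noncomputable def RJ (x y z p : ℝ) : ℝ :=
  (3/2) * ∫ t in Set.Ioi (0:ℝ),
    (Real.sqrt ((t + x) * (t + y) * (t + z)))⁻¹ * (t + p)⁻¹

noncomputable def RG (x y z : ℝ) : ℝ :=
  (1/4) * ∫ t in Set.Ioi (0:ℝ),
    (Real.sqrt ((t + x) * (t + y) * (t + z)))⁻¹ *
      (x / (t + x) + y / (t + y) + z / (t + z)) * t

/-!
The substitution `s = √(t + a)` turns the integrand of `R_C(a, a + c²)` into `2 / (s² + c²)`,
so `t ↦ (2 / c) arctan (√(t + a) / c)` is an antiderivative. Evaluating it between `0` and `∞`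
gives `R_C(a, a + c²) = (π/2 - arctan (√a / c)) / c`, and for `a = y²`, `c = x > 0` this is
`arctan (x / y) / x` because `π/2 - arctan (y / x) = arctan (x / y)`. Both sides of the theorem
are odd in `x`.
-/

namespace RC

variable {a c : ℝ}

theorem hasDerivAt_arctan_sqrt_div {t : ℝ} (ht : 0 < t + a) (hc : c ≠ 0) :
    HasDerivAt (fun t => 2 / c * arctan (√(t + a) / c))
      ((√(t + a))⁻¹ * (t + (a + c ^ 2))⁻¹) t := by
  have hsqrt : HasDerivAt (fun t => √(t + a)) (1 / (2 * √(t + a))) t := by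
    simpa [Function.comp_def] using
      (hasDerivAt_sqrt ht.ne').comp t ((hasDerivAt_id t).add_const a)
  have harctan := ((hasDerivAt_id _).div_const c).arctan.comp t hsqrt
  refine (harctan.const_mul (2 / c)).congr_deriv ?_
  have hsq : √(t + a) ^ 2 = t + a := sq_sqrt ht.le
  have hpos : 0 < √(t + a) := sqrt_pos.mpr ht
  have hden : 0 < t + (a + c ^ 2) := by nlinarith [sq_nonneg c]
  simp only [id, div_pow, hsq]
  field_simp
  ring

theorem tendsto_arctan_sqrt_div_atTop (hc : 0 < c) :
    Filter.Tendsto (fun t => 2 / c * arctan (√(t + a) / c)) Filter.atTop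
      (nhds (π / c)) := by
  have hratio : Filter.Tendsto (fun t => √(t + a) / c) Filter.atTop Filter.atTop :=
    (tendsto_sqrt_atTop.comp (Filter.tendsto_atTop_add_const_right _ a Filter.tendsto_id))
      |>.atTop_div_const hc
  rw [show π / c = 2 / c * (π / 2) by ring]
  exact ((tendsto_arctan_atTop.mono_right nhdsWithin_le_nhds).comp hratio).const_mul (2 / c)

theorem eq_pi_div_two_sub_arctan (ha : 0 ≤ a) (hc : 0 < c) :
    RC a (a + c ^ 2) = (π / 2 - arctan (√a / c)) / c := by
  have hcont : ContinuousWithinAt (fun t => 2 / c * arctan (√(t + a) / c)) (Set.Ici 0) 0 := by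
    fun_prop
  have hint := integral_Ioi_of_hasDerivAt_of_nonneg hcont
    (fun t (ht : 0 < t) => hasDerivAt_arctan_sqrt_div (by linarith) hc.ne')
    (fun t (ht : 0 < t) => by positivity) (tendsto_arctan_sqrt_div_atTop hc)
  rw [RC, hint, zero_add]
  field_simp

theorem mul_sq_add_sq_eq_arctan {x y : ℝ} (hx : 0 < x) (hy : 0 < y) :
    x * RC (y ^ 2) (y ^ 2 + x ^ 2) = arctan (x / y) := by
  rw [eq_pi_div_two_sub_arctan (sq_nonneg y) hx, sqrt_sq hy.le,
    ← arctan_inv_of_pos (div_pos hy hx), inv_div]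
  field_simp

end RC

theorem stmt2 (x y : ℝ) (hy : 0 < y) :
    x * RC (y ^ 2) (y ^ 2 + x ^ 2) = Real.arctan (x / y) := by
  rcases lt_trichotomy x 0 with hx | rfl | hx
  · have h := RC.mul_sq_add_sq_eq_arctan (neg_pos.mpr hx) hy
    rw [neg_sq, neg_div, arctan_neg] at h
    linarith
  · simp
  · exact RC.mul_sq_add_sq_eq_arctan hx hy
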